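/- Let (X, γ) be a strictly convex gauge plane. Then there exist nonzero vectors x, y ∈ X such that x ⊣ y and −x ⊣ y, where ⊣ denotes the orthogonality relation γ(u) ≤ γ(u + tv) for all t ∈ ℝ. -/

import Mathlib

/-!
Let `x` maximize `z ↦ γ (-z)` on `K` and put `M = γ (-x)`. Rescaling a vector `w` into `K` shows
`γ (-w) ≤ M * γ w` for all `w`, while `x ∈ K` gives `M * γ x ≤ γ (-x)`. A functional separating
`-x` from the open convex set `{γ < γ (-x)}` has a nonzero kernel vector `y` in dimension two, and
`-x ⊣ y`. Then `M * γ (x + t • y) ≥ γ (-x - t • y) ≥ γ (-x) = M * γ x`, so also `x ⊣ y`.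
-/

/-- Birkhoff-type orthogonality for a gauge `γ`. -/
def BirkhoffOrth {X : Type*} [AddCommGroup X] [Module ℝ X]
    (γ : X → ℝ) (x y : X) : Prop :=
  ∀ t : ℝ, γ x ≤ γ (x + t • y)

open Set Topology Module

theorem BirkhoffOrth.of_map_eq_zero {X : Type*} [AddCommGroup X] [Module ℝ X]
    {γ : X → ℝ} {v y : X} (f : X →ₗ[ℝ] ℝ) (hf : ∀ a, γ a < γ v → f a < f v) (hy : f y = 0) :
    BirkhoffOrth γ v y := fun t ↦ by
  by_contra! ht
  simpa [hy] using hf _ ht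

theorem BirkhoffOrth.of_neg {X : Type*} [AddCommGroup X] [Module ℝ X]
    {γ : X → ℝ} {x y : X} {M : ℝ} (hM : 0 < M) (hle : ∀ w, γ (-w) ≤ M * γ w)
    (hx : M * γ x ≤ γ (-x)) (h : BirkhoffOrth γ (-x) y) : BirkhoffOrth γ x y := fun t ↦ by
  refine le_of_mul_le_mul_left ?_ hM
  calc M * γ x ≤ γ (-x) := hx
    _ ≤ γ (-x + (-t) • y) := h (-t)
    _ = γ (-(x + t • y)) := by rw [neg_add, neg_smul]
    _ ≤ M * γ (x + t • y) := hle _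

section Gauge

variable {X : Type*} [AddCommGroup X] [Module ℝ X] {K : Set X}

theorem convex_setOf_gauge_lt (hK : Convex ℝ K) (hKabs : Absorbent ℝ K) (c : ℝ) :
    Convex ℝ {z | gauge K z < c} := by
  intro a ha b hb p q hp hq hpq
  simp only [mem_ofPred_eq] at ha hb ⊢
  calc gauge K (p • a + q • b) ≤ p * gauge K a + q * gauge K b := by
        grw [gauge_add_le hK hKabs, gauge_smul_of_nonneg hp, gauge_smul_of_nonneg hq]; rfl
    _ < p * c + q * c := by
        rcases hp.lt_or_eq with hp | rfl
        · exact add_lt_add_of_lt_of_le (mul_lt_mul_of_pos_left ha hp)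
            (mul_le_mul_of_nonneg_left hb.le hq)
        · simp_all
    _ = c := by rw [← add_mul, hpq, one_mul]

theorem gauge_neg_le_mul_gauge_of_isMaxOn (hK : Convex ℝ K) (hK0 : (0 : X) ∈ K)
    (hKabs : Absorbent ℝ K) {x : X} (hmax : IsMaxOn (fun z ↦ gauge K (-z)) K x) (w : X) :
    gauge K (-w) ≤ gauge K (-x) * gauge K w := by
  refine ge_of_tendsto (x := 𝓝[>] gauge K w)
    ((continuous_const_mul _).tendsto _ |>.mono_left nhdsWithin_le_nhds)
    (eventually_nhdsWithin_of_forall fun r (hr : gauge K w < r) ↦ ?_)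
  have hr0 : 0 < r := (gauge_nonneg w).trans_lt hr
  have hwK : r⁻¹ • w ∈ K := by
    refine setOfPred_gauge_lt_one_subset_self hK hK0 hKabs ?_
    rw [mem_ofPred_eq, gauge_smul_of_nonneg (inv_nonneg.2 hr0.le), smul_eq_mul,
      inv_mul_lt_one₀ hr0]
    exact hr
  have : gauge K (-(r⁻¹ • w)) ≤ gauge K (-x) := hmax hwK
  rw [← smul_neg, gauge_smul_of_nonneg (inv_nonneg.2 hr0.le), smul_eq_mul,
    inv_mul_le_iff₀ hr0] at this
  linarith

end Gauge

theorem exists_birkhoffOrth_gauge {X : Type*} [NormedAddCommGroup X] [NormedSpace ℝ X]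
    [FiniteDimensional ℝ X] (hdim : 1 < finrank ℝ X) {K : Set X} (hK : Convex ℝ K)
    (hK0 : K ∈ 𝓝 0) (v : X) : ∃ y ≠ 0, BirkhoffOrth (gauge K) v y := by
  obtain ⟨f, hf⟩ := geometric_hahn_banach_open_point
    (convex_setOf_gauge_lt hK (absorbent_nhds_zero hK0) (gauge K v))
    (isOpen_lt (continuous_gauge hK hK0) continuous_const) (lt_irrefl (gauge K v))
  obtain ⟨y, hy, hy0⟩ := Submodule.exists_mem_ne_zero_of_ne_bot
    (LinearMap.ker_ne_bot_of_finrank_lt (f := (f : X →ₗ[ℝ] ℝ)) (by simpa using hdim))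
  exact ⟨y, hy0, .of_map_eq_zero f hf hy⟩

theorem stmt_18_general
    {X : Type*} [NormedAddCommGroup X] [NormedSpace ℝ X]
    (hdim : Module.finrank ℝ X = 2)
    (K : Set X) (hKc : IsCompact K) (hKconv : Convex ℝ K)
    (hK0 : (0 : X) ∈ interior K) :
    ∃ x y : X, x ≠ 0 ∧ y ≠ 0 ∧
      BirkhoffOrth (gauge K) x y ∧ BirkhoffOrth (gauge K) (-x) y := by
  have : FiniteDimensional ℝ X := .of_finrank_pos (by omega)
  have : Nontrivial X := Module.nontrivial_of_finrank_eq_succ hdim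
  have hK : K ∈ 𝓝 0 := mem_interior_iff_mem_nhds.mp hK0
  have hKabs : Absorbent ℝ K := absorbent_nhds_zero hK
  obtain ⟨x, hxK, hmax⟩ := hKc.exists_isMaxOn ⟨0, mem_of_mem_nhds hK⟩
    ((continuous_gauge hKconv hK).comp continuous_neg).continuousOn
  have hle := gauge_neg_le_mul_gauge_of_isMaxOn hKconv (mem_of_mem_nhds hK) hKabs hmax
  have hpos : 0 < gauge K (-x) := by
    obtain ⟨w, hw⟩ := exists_ne (0 : X)
    have := (gauge_pos hKabs (hKc.isVonNBounded ℝ)).2 (neg_ne_zero.2 hw)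
    exact pos_of_mul_pos_left (this.trans_le (hle w)) (gauge_nonneg w)
  obtain ⟨y, hy0, hy⟩ := exists_birkhoffOrth_gauge (by omega) hKconv hK (-x)
  refine ⟨x, y, ?_, hy0, .of_neg hpos hle ?_ hy, hy⟩
  · rintro rfl
    simp at hpos
  · simpa using mul_le_of_le_one_right hpos.le (gauge_le_one_of_mem hxK)

/-- In a strictly convex gauge plane there exist nonzero vectors `x, y` with
`x ⊣ y` and `-x ⊣ y`. -/
theorem stmt_18
    {X : Type*} [NormedAddCommGroup X] [NormedSpace ℝ X]
    (hdim : Module.finrank ℝ X = 2)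
    (K : Set X) (hKc : IsCompact K) (hKconv : Convex ℝ K)
    (hK0 : (0 : X) ∈ interior K) (hKsc : StrictConvex ℝ K) :
    ∃ x y : X, x ≠ 0 ∧ y ≠ 0 ∧
      BirkhoffOrth (gauge K) x y ∧ BirkhoffOrth (gauge K) (-x) y :=
  stmt_18_general hdim K hKc hKconv hK0
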